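/- Let Γ be a crystallographic group with translation subgroup A, let C be a maximal cyclic subgroup of A, and let H ≤ N_Γ(C). Then the fixed set of H acting on ℝ^{n-1}(C) (the space of C-invariant lines) is contractible if HC/C is finite, and empty if HC/C is infinite. -/

import Mathlib

noncomputable section

/-- Euclidean `n`-space `ℝⁿ`. -/
abbrev Eucl (n : ℕ) := EuclideanSpace ℝ (Fin n)

/-- The isometry group of `ℝⁿ`. -/
abbrev IsoRn (n : ℕ) := Eucl n ≃ᵢ Eucl n

/-- `g` is the translation by the vector `v`. -/
def IsTranslationBy {n : ℕ} (g : IsoRn n) (v : Eucl n) : Prop := ∀ x, g x = x + v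

/-- The subgroup `Trans(ℝⁿ)` of translations of `ℝⁿ`. -/
def Translations (n : ℕ) : Subgroup (IsoRn n) where
  carrier := {g | ∃ v, IsTranslationBy g v}
  one_mem' := ⟨0, fun x => by simp [IsTranslationBy]⟩
  mul_mem' := by
    rintro g h ⟨v, hv⟩ ⟨w, hw⟩
    refine ⟨w + v, fun x => ?_⟩
    show g (h x) = x + (w + v)
    rw [hw x, hv (x + w), add_assoc]
  inv_mem' := by
    rintro g ⟨v, hv⟩
    refine ⟨-v, fun x => ?_⟩
    apply g.injective
    rw [IsometryEquiv.apply_inv_self, hv]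
    abel
  
/-- A crystallographic group of rank `n` is a discrete (equivalently, acting properly
discontinuously) cocompact subgroup of the isometry group of `ℝⁿ`. -/
def IsCrystallographic {n : ℕ} (Γ : Subgroup (IsoRn n)) : Prop :=
  (∀ K L : Set (Eucl n), IsCompact K → IsCompact L →
      {γ : Γ | ((γ : IsoRn n) '' K ∩ L).Nonempty}.Finite) ∧
  ∃ K : Set (Eucl n), IsCompact K ∧ (⋃ γ : Γ, (γ : IsoRn n) '' K) = Set.univ

/-- A group is virtually cyclic if it has a cyclic subgroup of finite index. -/
def VirtuallyCyclic (G : Type*) [Group G] : Prop :=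
  ∃ K : Subgroup G, IsCyclic K ∧ K.FiniteIndex

/-- `C` is a maximal cyclic subgroup of `A`: a cyclic subgroup of `A` not properly contained
in any cyclic subgroup of `A`. -/
def IsMaxCyclic {n : ℕ} (A C : Subgroup (IsoRn n)) : Prop :=
  C ≤ A ∧ (∃ c, C = Subgroup.zpowers c) ∧
    ∀ D : Subgroup (IsoRn n), D ≤ A → (∃ d, D = Subgroup.zpowers d) → C ≤ D → C = D

/-!
Since `H` normalises `C = ⟨c⟩`, every `g ∈ H` maps lines parallel to `v` to lines parallel to
`v`, so it induces an affine map of the space of lines, on which `C` acts trivially. The fixed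
set is the common fixed set of these affine maps, hence convex. If `H/(H ∩ C)` is finite, the
centroid of an orbit of this finite group is a fixed point, so the fixed set is nonempty and
contractible. Conversely, a fixed point is an `H`-invariant line `x₀ + ℝv`; composing any
`h ∈ H` with a suitable power of `c` yields an element of `Γ` moving `x₀` by at most `‖v‖`.
By proper discontinuity there are only finitely many such elements, and this bounds the index
of `H ∩ C` in `H`.
-/

theorem Subgroup.finiteIndex_inf_subgroupOf_of_forall_exists_mul_mem {G : Type*} [Group G]
    (C H : Subgroup G) {S : Set G} (hS : S.Finite) (h : ∀ g ∈ H, ∃ k ∈ C, g * k ∈ S) :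
    ((C ⊓ H).subgroupOf H).FiniteIndex := by
  choose! k hkC hkS using h
  have : Finite S := hS.to_subtype
  let F : H ⧸ (C ⊓ H).subgroupOf H → S := fun q => ⟨(q.out : G) * k q.out, hkS _ q.out.2⟩
  have hF : Function.Injective F := by
    intro q₁ q₂ hq
    rw [← QuotientGroup.out_eq' q₁, ← QuotientGroup.out_eq' q₂, QuotientGroup.eq,
      Subgroup.mem_subgroupOf]
    have hq' : (q₁.out : G) * k q₁.out = q₂.out * k q₂.out := congrArg Subtype.val hq
    have : ((q₁.out⁻¹ * q₂.out : H) : G) = k q₁.out * (k q₂.out)⁻¹ := by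
      simp only [Subgroup.coe_mul, Subgroup.coe_inv]
      rw [inv_mul_eq_iff_eq_mul, ← mul_assoc, hq', mul_inv_cancel_right]
    refine ⟨?_, (q₁.out⁻¹ * q₂.out).2⟩
    rw [this]
    exact C.mul_mem (hkC _ q₁.out.2) (C.inv_mem (hkC _ q₂.out.2))
  have := Finite.of_injective F hF
  exact Subgroup.finiteIndex_of_finite_quotient

theorem AffineMap.exists_semiconj_of_surjective {k V W : Type*} [Field k] [AddCommGroup V]
    [Module k V] [AddCommGroup W] [Module k W] (φ : V →ₗ[k] W) (hφ : Function.Surjective φ)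
    (g : V →ᵃ[k] V) (hg : ∀ x x', φ x = φ x' → φ (g x) = φ (g x')) :
    ∃ g' : W →ᵃ[k] W, Function.Semiconj φ g g' := by
  obtain ⟨σ, hσ⟩ := φ.exists_rightInverse_of_surjective (LinearMap.range_eq_top.2 hφ)
  refine ⟨φ.toAffineMap.comp (g.comp σ.toAffineMap), fun x => hg _ _ ?_⟩
  exact (LinearMap.congr_fun hσ (φ x)).symm

theorem AffineMap.exists_forall_isFixedPt_of_equivariant {k V P G Q : Type*} [Field k]
    [CharZero k] [AddCommGroup V] [Module k V] [AddTorsor V P] [Group G] [MulAction G Q]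
    [Fintype Q] [Nonempty Q] (f : G → P →ᵃ[k] P) (p : Q → P)
    (hp : ∀ g q, f g (p q) = p (g • q)) :
    ∃ y, ∀ g, Function.IsFixedPt (f g) y := by
  refine ⟨Finset.univ.centroid k p, fun g => ?_⟩
  have hσ := Finset.univ.centroid_map k (MulAction.toPerm g).toEmbedding p
  rw [Finset.map_univ_equiv, Equiv.coe_toEmbedding] at hσ
  calc f g (Finset.univ.centroid k p) = Finset.univ.centroid k (f g ∘ p) :=
        Finset.univ.map_affineCombination p _
          (Finset.sum_centroidWeights_eq_one_of_nonempty k _ Finset.univ_nonempty) (f g)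
    _ = Finset.univ.centroid k (p ∘ MulAction.toPerm g) := congrArg _ (funext (hp g))
    _ = Finset.univ.centroid k p := hσ.symm

theorem contractibleSpace_fixedSet_of_finiteIndex {V W : Type*} [NormedAddCommGroup V]
    [NormedSpace ℝ V] [NormedAddCommGroup W] [NormedSpace ℝ W] (H : Subgroup (V ≃ᵢ V))
    (K : Subgroup H) [K.FiniteIndex] (φ : V →ₗ[ℝ] W) (hφ : Function.Surjective φ)
    (hH : ∀ g ∈ H, ∀ x x', φ x = φ x' → φ (g x) = φ (g x'))
    (hK : ∀ k ∈ K, ∀ x, φ ((k : V ≃ᵢ V) x) = φ x) :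
    ContractibleSpace {y : W // ∀ g ∈ H, ∀ x, φ x = y → φ (g x) = y} := by
  choose f hf using fun g : H => AffineMap.exists_semiconj_of_surjective φ hφ
    (g : V ≃ᵢ V).toRealAffineIsometryEquiv.toAffineEquiv.toAffineMap (hH g g.2)
  have hfix : {y | ∀ g ∈ H, ∀ x, φ x = y → φ (g x) = y} = {y | ∀ g : H, f g y = y} := by
    ext y
    constructor
    · intro hy g
      obtain ⟨x, rfl⟩ := hφ y
      exact (hf g x).symm.trans (hy g g.2 x rfl)
    · rintro hy g hg x rfl
      exact (hf ⟨g, hg⟩ x).trans (hy _)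
  have hconv : Convex ℝ {y | ∀ g : H, f g y = y} := by
    intro y₁ hy₁ y₂ hy₂ a b _ _ hab g
    rw [Convex.combo_affine_apply hab, hy₁ g, hy₂ g]
  have : Fintype (H ⧸ K) := Fintype.ofFinite _
  let p : H ⧸ K → W := Quotient.lift (fun h : H => φ ((h : V ≃ᵢ V) 0)) fun a b hab => by
    obtain ⟨k, hk, rfl⟩ : ∃ k ∈ K, b = a * k :=
      ⟨a⁻¹ * b, QuotientGroup.leftRel_apply.mp hab, (mul_inv_cancel_left a b).symm⟩
    exact (hH a a.2 _ _ (hK k hk 0)).symm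
  obtain ⟨y, hy⟩ := AffineMap.exists_forall_isFixedPt_of_equivariant f p fun g q =>
    Quotient.inductionOn' q fun h => (hf g _).symm
  rw [← hfix] at hconv
  exact hconv.contractibleSpace ⟨y, hfix ▸ hy⟩

namespace IsTranslationBy

variable {n : ℕ} {c : IsoRn n} {v : Eucl n}

theorem zpow (hc : IsTranslationBy c v) (k : ℤ) : IsTranslationBy (c ^ k) (k • v) := by
  induction k using Int.induction_on with
  | zero => intro x; simp
  | succ k ih =>
    intro x
    rw [zpow_add_one, IsometryEquiv.mul_apply, hc, ih, add_smul, one_smul, add_right_comm,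
      add_assoc]
  | pred k ih =>
    intro x
    have hinv : c⁻¹ x = x - v :=
      c.injective (by rw [IsometryEquiv.apply_inv_self, hc, sub_add_cancel])
    rw [zpow_sub_one, IsometryEquiv.mul_apply, hinv, ih, sub_smul, one_smul, sub_add_eq_add_sub,
      add_sub_assoc]

theorem map_sub_mem_span_of_mem_normalizer (hc : IsTranslationBy c v) {g : IsoRn n}
    (hg : g ∈ Subgroup.normalizer (Subgroup.zpowers c : Set (IsoRn n)))
    {x x' : Eucl n} (hx : x - x' ∈ ℝ ∙ v) : g x - g x' ∈ ℝ ∙ v := by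
  obtain ⟨m, hm⟩ := Subgroup.mem_zpowers_iff.mp ((hg c).mp (Subgroup.mem_zpowers c))
  have hgv : g v - g 0 = m • v := by
    have : g (c 0) = (g * c * g⁻¹) (g 0) := by simp [IsometryEquiv.mul_apply]
    rw [← hm, hc.zpow m, hc, zero_add] at this
    rw [this, add_sub_cancel_left]
  obtain ⟨t, ht⟩ := Submodule.mem_span_singleton.mp hx
  have hL : ∀ y, g y = g.toRealLinearIsometryEquiv y + g 0 := fun y => by simp
  have hlin : g x - g x' = t • (g v - g 0) := by
    rw [hL x, hL x', add_sub_add_right_eq_sub, ← map_sub, ← ht, map_smul, hL v,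
      add_sub_cancel_right]
  rw [hlin, hgv]
  exact Submodule.smul_mem _ t
    (Submodule.smul_of_tower_mem _ m (Submodule.mem_span_singleton_self v))

end IsTranslationBy

theorem IsCrystallographic.finite_setOf_dist_le {n : ℕ} {Γ : Subgroup (IsoRn n)}
    (hΓ : IsCrystallographic Γ) (x₀ : Eucl n) (r : ℝ) :
    {γ | γ ∈ Γ ∧ dist (γ x₀) x₀ ≤ r}.Finite := by
  refine ((hΓ.1 {x₀} (Metric.closedBall x₀ r) isCompact_singleton
    (isCompact_closedBall x₀ r)).image Subtype.val).subset ?_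
  rintro γ ⟨hγ, hdist⟩
  exact ⟨⟨γ, hγ⟩, ⟨γ x₀, Set.mem_image_of_mem _ rfl, hdist⟩, rfl⟩

theorem finiteIndex_inf_subgroupOf_of_forall_sub_mem_span {n : ℕ} {Γ : Subgroup (IsoRn n)}
    (hΓ : IsCrystallographic Γ) {c : IsoRn n} {v : Eucl n} (hc : IsTranslationBy c v)
    (hcΓ : c ∈ Γ) {H : Subgroup (IsoRn n)}
    (hH : H ≤ Γ ⊓ Subgroup.normalizer (Subgroup.zpowers c : Set (IsoRn n)))
    (x₀ : Eucl n) (hx₀ : ∀ g ∈ H, g x₀ - x₀ ∈ ℝ ∙ v) :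
    ((Subgroup.zpowers c ⊓ H).subgroupOf H).FiniteIndex := by
  refine Subgroup.finiteIndex_inf_subgroupOf_of_forall_exists_mul_mem _ _
    (hΓ.finite_setOf_dist_le x₀ ‖v‖) fun h hh => ?_
  obtain ⟨t, ht⟩ := Submodule.mem_span_singleton.mp (hx₀ h hh)
  refine ⟨h⁻¹ * c ^ (-⌊t⌋) * h, (Subgroup.mem_set_normalizer_iff''.mp (hH hh).2 _).mp
    (Subgroup.zpow_mem_zpowers c _), ?_⟩
  rw [← mul_assoc, mul_inv_cancel_left]
  refine ⟨Γ.mul_mem (Γ.zpow_mem hcΓ _) (hH hh).1, ?_⟩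
  have : (c ^ (-⌊t⌋) * h) x₀ - x₀ = Int.fract t • v := by
    rw [IsometryEquiv.mul_apply, hc.zpow, Int.fract, sub_smul, ht, ← Int.cast_smul_eq_zsmul ℝ]
    module
  rw [dist_eq_norm, this, norm_smul, Real.norm_of_nonneg (Int.fract_nonneg t)]
  exact mul_le_of_le_one_left (norm_nonneg v) (Int.fract_lt_one t).le

/-- The space `ℝ^{n-1}(C)` of `C`-invariant lines is modelled by `Eucl (n - 1)` through `φ`,
whose fibres are the lines parallel to `v`; `HC/C ≅ H/(H ∩ C)` is the quotient of `H` by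
`(zpowers c ⊓ H).subgroupOf H`. -/
theorem fixed_set_on_line_space_general
    (n : ℕ) (Γ : Subgroup (IsoRn n)) (hΓ : IsCrystallographic Γ)
    (c : IsoRn n) (v : Eucl n) (hc : IsTranslationBy c v)
    (hC : IsMaxCyclic (Γ ⊓ Translations n) (Subgroup.zpowers c))
    (H : Subgroup (IsoRn n)) (hH : H ≤ Γ ⊓ Subgroup.normalizer ((Subgroup.zpowers c : Subgroup (IsoRn n)) : Set (IsoRn n)))
    (φ : Eucl n →ₗ[ℝ] Eucl (n - 1)) (hφ : Function.Surjective φ)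
    (hker : LinearMap.ker φ = Submodule.span ℝ {v}) :
    (((Subgroup.zpowers c ⊓ H).subgroupOf H).FiniteIndex →
        ContractibleSpace {y : Eucl (n - 1) // ∀ g ∈ H, ∀ x : Eucl n, φ x = y → φ (g x) = y}) ∧
      (¬ ((Subgroup.zpowers c ⊓ H).subgroupOf H).FiniteIndex →
        {y : Eucl (n - 1) | ∀ g ∈ H, ∀ x : Eucl n, φ x = y → φ (g x) = y} = ∅) := by
  have hfiber : ∀ g ∈ H, ∀ x x', φ x = φ x' → φ (g x) = φ (g x') := by
    intro g hg x x' h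
    rw [← LinearMap.sub_mem_ker_iff, hker] at h ⊢
    exact hc.map_sub_mem_span_of_mem_normalizer (hH hg).2 h
  refine ⟨fun _ => contractibleSpace_fixedSet_of_finiteIndex H
    ((Subgroup.zpowers c ⊓ H).subgroupOf H) φ hφ hfiber ?_, fun hinf => ?_⟩
  · intro k hk x
    obtain ⟨m, hm⟩ := Subgroup.mem_zpowers_iff.mp (Subgroup.mem_subgroupOf.mp hk).1
    have hv : φ v = 0 := by
      rw [← LinearMap.mem_ker, hker]
      exact Submodule.mem_span_singleton_self v
    rw [← hm, hc.zpow m, map_add, map_zsmul, hv, smul_zero, add_zero]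
  · refine Set.eq_empty_of_forall_notMem fun y hy => hinf ?_
    obtain ⟨x₀, rfl⟩ := hφ y
    refine finiteIndex_inf_subgroupOf_of_forall_sub_mem_span hΓ hc
      (hC.1 (Subgroup.mem_zpowers c)).1 hH x₀ fun g hg => ?_
    rw [← hker, LinearMap.sub_mem_ker_iff]
    exact hy g hg x₀ rfl

/-- Let `Γ` be crystallographic with translation subgroup `A`, `C = ⟨c⟩ ≤ A` maximal cyclic
(`c` the translation by `v ≠ 0`), and `H ≤ N_Γ(C)`.  Identify the space of `C`-invariant
lines with `ℝ^{n-1}` via a surjective linear map `φ` with kernel `ℝv`.  The fixed set of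
`H` acting on the space of lines — the set of `y = φ(x)` with `φ(g x) = φ(x)` for all
`g ∈ H` — is contractible if `HC/C ≅ H/(H ∩ C)` is finite, and empty if it is infinite. -/
theorem fixed_set_on_line_space
    (n : ℕ) (hn : 1 ≤ n) (Γ : Subgroup (IsoRn n)) (hΓ : IsCrystallographic Γ)
    (c : IsoRn n) (v : Eucl n) (hv : v ≠ 0) (hc : IsTranslationBy c v)
    (hC : IsMaxCyclic (Γ ⊓ Translations n) (Subgroup.zpowers c))
    (H : Subgroup (IsoRn n)) (hH : H ≤ Γ ⊓ Subgroup.normalizer ((Subgroup.zpowers c : Subgroup (IsoRn n)) : Set (IsoRn n)))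
    (φ : Eucl n →ₗ[ℝ] Eucl (n - 1)) (hφ : Function.Surjective φ)
    (hker : LinearMap.ker φ = Submodule.span ℝ {v}) :
    (((Subgroup.zpowers c ⊓ H).subgroupOf H).FiniteIndex →
        ContractibleSpace {y : Eucl (n - 1) // ∀ g ∈ H, ∀ x : Eucl n, φ x = y → φ (g x) = y}) ∧
      (¬ ((Subgroup.zpowers c ⊓ H).subgroupOf H).FiniteIndex →
        {y : Eucl (n - 1) | ∀ g ∈ H, ∀ x : Eucl n, φ x = y → φ (g x) = y} = ∅) :=
  fixed_set_on_line_space_general n Γ hΓ c v hc hC H hH φ hφ hker
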